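/- arXiv:1508.00973 — 6 statements merged into one kernel-verified Lean document; each statement's English description precedes it below -/
import Mathlib

section
/- Let k ≥ 1 and let π : Fin k → ℝ be a probability vector (π y ≥ 0 for all y and ∑ y, π y = 1), and let M_A, M_B, M_C : Matrix (Fin k) (Fin k) ℝ be column-stochastic matrices (all entries nonnegative and each column sums to 1), where M_X x y represents P(X = x | Y = y) in a latent class model with latent variable Y and conditionally independent observed variables A, B, C. Fix a state b : Fin k. Define the matrices P_AC : Matrix (Fin k) (Fin k) ℝ by P_AC a c = ∑ y, π y * M_A a y * M_C c y, and P_AbC : Matrix (Fin k) (Fin k) ℝ by P_AbC a c = ∑ y, π y * M_A a y * M_B b y * M_C c y. If M_A and P_AC are invertible, then M_A * Matrix.diagonal (fun y => M_B b y) * M_A⁻¹ = P_AbC * P_AC⁻¹. -/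
open Matrix

/-- In a latent class model with latent variable `Y` (marginal `pr`) and
conditionally independent observed variables `A, B, C` with column-stochastic conditional
matrices `M_A, M_B, M_C`, fixing a state `b`, if `M_A` and `P_AC` are invertible then
`M_A * diag(P(B=b|Y=·)) * M_A⁻¹ = P_AbC * P_AC⁻¹`. -/
theorem stmt0 (k : ℕ) (hk : 1 ≤ k) (pr : Fin k → ℝ)
    (hpr0 : ∀ y, 0 ≤ pr y) (hpr1 : ∑ y, pr y = 1)
    (M_A M_B M_C : Matrix (Fin k) (Fin k) ℝ)
    (hA0 : ∀ x y, 0 ≤ M_A x y) (hA1 : ∀ y, ∑ x, M_A x y = 1)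
    (hB0 : ∀ x y, 0 ≤ M_B x y) (hB1 : ∀ y, ∑ x, M_B x y = 1)
    (hC0 : ∀ x y, 0 ≤ M_C x y) (hC1 : ∀ y, ∑ x, M_C x y = 1)
    (b : Fin k)
    (P_AC P_AbC : Matrix (Fin k) (Fin k) ℝ)
    (hPAC : ∀ a c, P_AC a c = ∑ y, pr y * M_A a y * M_C c y)
    (hPAbC : ∀ a c, P_AbC a c = ∑ y, pr y * M_A a y * M_B b y * M_C c y)
    (hAinv : IsUnit M_A) (hPinv : IsUnit P_AC) :
    M_A * Matrix.diagonal (fun y => M_B b y) * M_A⁻¹ = P_AbC * P_AC⁻¹ := by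
  have hAdet : IsUnit M_A.det := (Matrix.isUnit_iff_isUnit_det M_A).mp hAinv
  have hPdet : IsUnit P_AC.det := (Matrix.isUnit_iff_isUnit_det P_AC).mp hPinv
  set Q : Matrix (Fin k) (Fin k) ℝ := fun y c => pr y * M_C c y with hQ
  have h1 : P_AC = M_A * Q := by
    ext a c
    rw [hPAC, Matrix.mul_apply]
    apply Finset.sum_congr rfl
    intro y _
    simp [hQ]; ring
  have h2 : P_AbC = M_A * (Matrix.diagonal (fun y => M_B b y) * Q) := by
    ext a c
    rw [hPAbC, Matrix.mul_apply]
    apply Finset.sum_congr rfl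
    intro y _
    rw [Matrix.diagonal_mul]
    simp [hQ]; ring
  have key : P_AbC = M_A * Matrix.diagonal (fun y => M_B b y) * M_A⁻¹ * P_AC := by
    rw [h1, h2, Matrix.mul_assoc (M_A * Matrix.diagonal _), Matrix.nonsing_inv_mul_cancel_left _ _ hAdet, Matrix.mul_assoc]
  rw [key, Matrix.mul_nonsing_inv_cancel_right _ _ hPdet]
end

section
/- Let k ≥ 1, π : Fin k → ℝ, M_A, M_B, M_C : Matrix (Fin k) (Fin k) ℝ, and fix b : Fin k. Define P_AC a c = ∑ y, π y * M_A a y * M_C c y and P_AbC a c = ∑ y, π y * M_A a y * M_B b y * M_C c y. Assume M_A and P_AC are invertible. Then for every y : Fin k, the y-th column of M_A, i.e. the vector v : Fin k → ℝ with v a = M_A a y, satisfies (P_AbC * P_AC⁻¹).mulVec v = (M_B b y) • v; that is, each column of M_A is an eigenvector of P_AbC * P_AC⁻¹ with eigenvalue M_B b y = P(B = b | Y = y). -/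
open Matrix

/-- each column of `M_A` is an eigenvector of `P_AbC * P_AC⁻¹` with eigenvalue
`M_B b y = P(B = b | Y = y)`. -/
theorem stmt4 (k : ℕ) (hk : 1 ≤ k) (pr : Fin k → ℝ)
    (M_A M_B M_C : Matrix (Fin k) (Fin k) ℝ) (b : Fin k)
    (P_AC P_AbC : Matrix (Fin k) (Fin k) ℝ)
    (hPAC : ∀ a c, P_AC a c = ∑ y, pr y * M_A a y * M_C c y)
    (hPAbC : ∀ a c, P_AbC a c = ∑ y, pr y * M_A a y * M_B b y * M_C c y)
    (hAinv : IsUnit M_A) (hPinv : IsUnit P_AC) :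
    ∀ y : Fin k, (P_AbC * P_AC⁻¹).mulVec (fun a => M_A a y) =
      (M_B b y) • (fun a => M_A a y) := by
  set N : Matrix (Fin k) (Fin k) ℝ := (Matrix.diagonal pr) * M_Cᵀ with hN
  set D : Matrix (Fin k) (Fin k) ℝ := Matrix.diagonal (fun y => M_B b y) with hD
  have hPACeq : P_AC = M_A * N := by
    ext a c
    rw [hPAC]
    simp [hN, Matrix.mul_apply, Matrix.diagonal_apply, Finset.sum_ite_eq,
      Matrix.transpose_apply]
    ring_nf
    apply Finset.sum_congr rfl
    intro y _
    ring
  have hPAbCeq : P_AbC = M_A * D * N := by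
    ext a c
    rw [hPAbC]
    simp [hN, hD, Matrix.mul_apply, Matrix.diagonal_apply, Finset.sum_ite_eq,
      Matrix.transpose_apply]
    apply Finset.sum_congr rfl
    intro y _
    ring
  have hAdet : IsUnit M_A.det := (Matrix.isUnit_iff_isUnit_det _).mp hAinv
  have hPdet : IsUnit P_AC.det := (Matrix.isUnit_iff_isUnit_det _).mp hPinv
  have hNdet : IsUnit N.det := by
    have : IsUnit (M_A.det * N.det) := by
      rw [← Matrix.det_mul, ← hPACeq]; exact hPdet
    exact isUnit_of_mul_isUnit_right this
  have hkey : P_AbC * P_AC⁻¹ = M_A * D * M_A⁻¹ := by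
    rw [hPAbCeq, hPACeq, Matrix.mul_inv_rev]
    rw [Matrix.mul_assoc (M_A * D), ← Matrix.mul_assoc N, Matrix.mul_nonsing_inv _ hNdet,
      Matrix.one_mul]
  intro y
  rw [hkey]
  have hcol : (fun a => M_A a y) = M_A.mulVec (Pi.single y 1) := by
    ext a
    simp [Matrix.mulVec, dotProduct, Pi.single_apply, Finset.sum_ite_eq]
  rw [hcol, ← Matrix.mulVec_mulVec, ← Matrix.mulVec_mulVec,
    Matrix.mulVec_mulVec _ M_A⁻¹ M_A, Matrix.nonsing_inv_mul _ hAdet, Matrix.one_mulVec]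
  have hDv : D.mulVec (Pi.single y 1) = (M_B b y) • (Pi.single y 1 : Fin k → ℝ) := by
    ext a
    simp [hD, Matrix.mulVec, dotProduct, Matrix.diagonal_apply, Pi.single_apply,
      Finset.sum_ite_eq]
    by_cases h : a = y <;> simp [h]
  rw [hDv, Matrix.mulVec_smul]
end

section
/- Let k ≥ 1, π : Fin k → ℝ, M_A, M_B, M_C : Matrix (Fin k) (Fin k) ℝ, and fix b : Fin k. Define P_AC a c = ∑ y, π y * M_A a y * M_C c y and P_AbC a c = ∑ y, π y * M_A a y * M_B b y * M_C c y. Assume M_A and P_AC are invertible. Then for every y : Fin k, the value M_B b y = P(B = b | Y = y) is an eigenvalue of the matrix P_AbC * P_AC⁻¹, i.e. M_B b y belongs to the spectrum of the linear map on (Fin k → ℝ) given by multiplication by P_AbC * P_AC⁻¹. -/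
open Matrix

/-- each value `M_B b y = P(B = b | Y = y)` is an eigenvalue of
`P_AbC * P_AC⁻¹`, i.e. it belongs to the spectrum of the linear map on `Fin k → ℝ`
given by multiplication by this matrix. -/
theorem stmt5 (k : ℕ) (hk : 1 ≤ k) (pr : Fin k → ℝ)
    (M_A M_B M_C : Matrix (Fin k) (Fin k) ℝ) (b : Fin k)
    (P_AC P_AbC : Matrix (Fin k) (Fin k) ℝ)
    (hPAC : ∀ a c, P_AC a c = ∑ y, pr y * M_A a y * M_C c y)
    (hPAbC : ∀ a c, P_AbC a c = ∑ y, pr y * M_A a y * M_B b y * M_C c y)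
    (hAinv : IsUnit M_A) (hPinv : IsUnit P_AC) :
    ∀ y : Fin k, M_B b y ∈ spectrum ℝ (Matrix.toLin' (P_AbC * P_AC⁻¹)) := by
  intro y
  set D : Matrix (Fin k) (Fin k) ℝ := Matrix.diagonal (fun z => M_B b z) with hD
  set Q : Matrix (Fin k) (Fin k) ℝ := Matrix.diagonal pr * M_Cᵀ with hQ
  have hPACeq : P_AC = M_A * Q := by
    ext a c
    rw [hPAC, hQ, ← Matrix.mul_assoc, Matrix.mul_apply]
    simp only [Matrix.mul_diagonal, Matrix.transpose_apply]
    exact Finset.sum_congr rfl fun z _ => by ring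
  have hPAbCeq : P_AbC = M_A * D * Q := by
    ext a c
    rw [hPAbC, hQ, ← Matrix.mul_assoc, Matrix.mul_apply]
    simp only [hD, Matrix.mul_diagonal, Matrix.transpose_apply]
    exact Finset.sum_congr rfl fun z _ => by ring
  have hQdet : IsUnit Q.det := by
    have h1 : IsUnit (M_A.det * Q.det) := by
      rw [← Matrix.det_mul, ← hPACeq]
      exact (Matrix.isUnit_iff_isUnit_det P_AC).mp hPinv
    exact isUnit_of_mul_isUnit_right h1
  have hkey : P_AbC * P_AC⁻¹ = M_A * D * M_A⁻¹ := by
    rw [hPAbCeq, hPACeq, Matrix.mul_inv_rev]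
    calc M_A * D * Q * (Q⁻¹ * M_A⁻¹) = M_A * D * (Q * Q⁻¹) * M_A⁻¹ := by
          simp only [Matrix.mul_assoc]
      _ = M_A * D * M_A⁻¹ := by rw [Matrix.mul_nonsing_inv Q hQdet, Matrix.mul_one]
  rw [hkey]
  have hspec : spectrum ℝ (Matrix.toLin' (M_A * D * M_A⁻¹))
      = spectrum ℝ (M_A * D * M_A⁻¹) := by
    have : Matrix.toLin' (M_A * D * M_A⁻¹)
        = Matrix.toLinAlgEquiv' (M_A * D * M_A⁻¹) := rfl
    rw [this, AlgEquiv.spectrum_eq]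
  rw [hspec, spectrum.mem_iff]
  intro hU
  have hE : algebraMap ℝ (Matrix (Fin k) (Fin k) ℝ) (M_B b y) - M_A * D * M_A⁻¹
      = M_A * Matrix.diagonal (fun z => M_B b y - M_B b z) * M_A⁻¹ := by
    have hdiag : Matrix.diagonal (fun z => M_B b y - M_B b z)
        = (M_B b y) • (1 : Matrix (Fin k) (Fin k) ℝ) - D := by
      ext i j
      by_cases h : i = j <;> simp [hD, Matrix.diagonal_apply, h, Matrix.one_apply]
    rw [hdiag, Matrix.mul_sub, Matrix.sub_mul, Algebra.algebraMap_eq_smul_one]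
    congr 1
    rw [Matrix.mul_smul, Matrix.mul_one, Matrix.smul_mul,
      Matrix.mul_nonsing_inv M_A ((Matrix.isUnit_iff_isUnit_det M_A).mp hAinv)]
  rw [hE] at hU
  have hdet0 : (M_A * Matrix.diagonal (fun z => M_B b y - M_B b z) * M_A⁻¹).det = 0 := by
    rw [Matrix.det_mul, Matrix.det_mul, Matrix.det_diagonal]
    have : ∏ z, (M_B b y - M_B b z) = 0 :=
      Finset.prod_eq_zero (Finset.mem_univ y) (by simp)
    rw [this]; ring
  have := (Matrix.isUnit_iff_isUnit_det _).mp hU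
  rw [hdet0] at this
  exact (by simpa using this : False)
end

section
/- Let k ≥ 1, π : Fin k → ℝ, M_A, M_B, M_C : Matrix (Fin k) (Fin k) ℝ, and fix b : Fin k. Define P_AC a c = ∑ y, π y * M_A a y * M_C c y and P_AbC a c = ∑ y, π y * M_A a y * M_B b y * M_C c y. Assume M_A and P_AC are invertible. Then the characteristic polynomial of P_AbC * P_AC⁻¹ equals ∏ y : Fin k, (X - C(M_B b y)); in particular the multiset of roots (with multiplicity) of the characteristic polynomial of P_AbC * P_AC⁻¹ is exactly the multiset {M_B b y : y : Fin k}. -/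
open Matrix Polynomial

private lemma charpoly_conj_aux {k : ℕ} (A D : Matrix (Fin k) (Fin k) ℝ)
    (hA : IsUnit A) : (A * D * A⁻¹).charpoly = D.charpoly := by
  have hAd : IsUnit A.det := (Matrix.isUnit_iff_isUnit_det A).mp hA
  have h1 : A * A⁻¹ = 1 := Matrix.mul_nonsing_inv A hAd
  have h2 : A⁻¹ * A = 1 := Matrix.nonsing_inv_mul A hAd
  have hone : A.map (C : ℝ →+* ℝ[X]) * (A⁻¹).map C = 1 := by
    rw [← Matrix.map_mul, h1, Matrix.map_one _ (map_zero _) (map_one _)]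
  have key : charmatrix (A * D * A⁻¹) =
      A.map C * charmatrix D * (A⁻¹).map C := by
    unfold Matrix.charmatrix
    simp only [RingHom.mapMatrix_apply, Matrix.scalar_apply, ← Matrix.smul_one_eq_diagonal]
    rw [Matrix.mul_sub, Matrix.sub_mul]
    congr 1
    · rw [Matrix.mul_smul, Matrix.mul_one, Matrix.smul_mul, hone]
    · rw [← Matrix.map_mul, ← Matrix.map_mul]
  rw [Matrix.charpoly, key, Matrix.det_mul, Matrix.det_mul]
  have : (A.map (C : ℝ →+* ℝ[X])).det * ((A⁻¹).map C).det = 1 := by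
    rw [← Matrix.det_mul, ← Matrix.map_mul, h1, Matrix.map_one _ (map_zero _) (map_one _),
      Matrix.det_one]
  calc (A.map (C : ℝ →+* ℝ[X])).det * (charmatrix D).det * ((A⁻¹).map C).det
      = (charmatrix D).det * ((A.map (C : ℝ →+* ℝ[X])).det * ((A⁻¹).map C).det) := by ring
    _ = (charmatrix D).det := by rw [this, mul_one]
    _ = D.charpoly := rfl

private lemma charpoly_diag_aux {k : ℕ} (d : Fin k → ℝ) :
    (Matrix.diagonal d).charpoly = ∏ y : Fin k, (X - C (d y)) := by
  have : charmatrix (Matrix.diagonal d) =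
      Matrix.diagonal (fun y => X - C (d y)) := by
    unfold Matrix.charmatrix
    simp only [RingHom.mapMatrix_apply, Matrix.scalar_apply,
      Matrix.diagonal_map (map_zero _), ← Matrix.diagonal_sub]
  rw [Matrix.charpoly, this, Matrix.det_diagonal]

/-- the characteristic polynomial of `P_AbC * P_AC⁻¹` is
`∏ y, (X - C (M_B b y))`; in particular its multiset of roots (with multiplicity)
is exactly `{M_B b y : y}`. -/
theorem stmt6 (k : ℕ) (hk : 1 ≤ k) (pr : Fin k → ℝ)
    (M_A M_B M_C : Matrix (Fin k) (Fin k) ℝ) (b : Fin k)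
    (P_AC P_AbC : Matrix (Fin k) (Fin k) ℝ)
    (hPAC : ∀ a c, P_AC a c = ∑ y, pr y * M_A a y * M_C c y)
    (hPAbC : ∀ a c, P_AbC a c = ∑ y, pr y * M_A a y * M_B b y * M_C c y)
    (hAinv : IsUnit M_A) (hPinv : IsUnit P_AC) :
    (P_AbC * P_AC⁻¹).charpoly = ∏ y : Fin k, (X - C (M_B b y)) ∧
      (P_AbC * P_AC⁻¹).charpoly.roots =
        Multiset.map (fun y => M_B b y) Finset.univ.val := by
  set Q : Matrix (Fin k) (Fin k) ℝ := Matrix.diagonal pr * M_Cᵀ with hQ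
  set D : Matrix (Fin k) (Fin k) ℝ := Matrix.diagonal (fun y => M_B b y) with hD
  have hfac1 : P_AC = M_A * Q := by
    ext a c
    simp [hQ, Matrix.mul_apply, Matrix.diagonal_apply, hPAC, Matrix.transpose_apply,
      Finset.sum_ite_eq, mul_comm, mul_assoc, mul_left_comm]
  have hfac2 : P_AbC = M_A * (D * Q) := by
    ext a c
    simp [hQ, hD, Matrix.mul_apply, Matrix.diagonal_apply, hPAbC, Matrix.transpose_apply,
      Finset.sum_ite_eq, mul_comm, mul_assoc, mul_left_comm]
  have hAd : IsUnit M_A.det := (Matrix.isUnit_iff_isUnit_det M_A).mp hAinv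
  have hPd : IsUnit P_AC.det := (Matrix.isUnit_iff_isUnit_det P_AC).mp hPinv
  have hQd : IsUnit Q.det := by
    rw [hfac1, Matrix.det_mul] at hPd
    exact isUnit_of_mul_isUnit_right hPd
  have hmain : P_AbC * P_AC⁻¹ = M_A * D * M_A⁻¹ := by
    rw [hfac1, hfac2, Matrix.mul_inv_rev]
    calc M_A * (D * Q) * (Q⁻¹ * M_A⁻¹)
        = M_A * D * (Q * Q⁻¹) * M_A⁻¹ := by
          simp only [Matrix.mul_assoc]
      _ = M_A * D * M_A⁻¹ := by rw [Matrix.mul_nonsing_inv Q hQd, Matrix.mul_one]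
  have hcp : (P_AbC * P_AC⁻¹).charpoly = ∏ y : Fin k, (X - C (M_B b y)) := by
    rw [hmain, charpoly_conj_aux M_A D hAinv, hD, charpoly_diag_aux]
  refine ⟨hcp, ?_⟩
  rw [hcp]
  have : (∏ y : Fin k, (X - C (M_B b y))) =
      ((Multiset.map (fun y => M_B b y) Finset.univ.val).map fun a => X - C a).prod := by
    rw [Multiset.map_map]
    rfl
  rw [this, Polynomial.roots_multiset_prod_X_sub_C]
end

section
/- Let k ≥ 1, π : Fin k → ℝ, and M_A, M_B, M_C, N, K : Matrix (Fin k) (Fin k) ℝ with M_A = N * K (the conditional matrix of A given Y obtained by composing the path A ← Z ← Y, with N = P(A | Z) and K = P(Z | Y)). Fix b : Fin k and define P_AC a c = ∑ y, π y * M_A a y * M_C c y and P_AbC a c = ∑ y, π y * M_A a y * M_B b y * M_C c y. If N * K and P_AC are invertible, then (N * K) * Matrix.diagonal (fun y => M_B b y) * (N * K)⁻¹ = P_AbC * P_AC⁻¹. -/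
open Matrix

/-- the eigenvalue identity still holds when the conditional matrix of `A`
given `Y` factors along a path `A ← Z ← Y` as `M_A = N * K`. -/
theorem stmt7 (k : ℕ) (hk : 1 ≤ k) (pr : Fin k → ℝ)
    (M_A M_B M_C N K : Matrix (Fin k) (Fin k) ℝ)
    (hfactor : M_A = N * K)
    (b : Fin k)
    (P_AC P_AbC : Matrix (Fin k) (Fin k) ℝ)
    (hPAC : ∀ a c, P_AC a c = ∑ y, pr y * M_A a y * M_C c y)
    (hPAbC : ∀ a c, P_AbC a c = ∑ y, pr y * M_A a y * M_B b y * M_C c y)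
    (hNKinv : IsUnit (N * K)) (hPinv : IsUnit P_AC) :
    (N * K) * Matrix.diagonal (fun y => M_B b y) * (N * K)⁻¹ = P_AbC * P_AC⁻¹ := by
  subst hfactor
  set A := N * K with hA
  set Q : Matrix (Fin k) (Fin k) ℝ := Matrix.diagonal pr * M_Cᵀ with hQ
  have hPAC' : P_AC = A * Q := by
    ext a c
    simp [hQ, Matrix.mul_assoc, Matrix.mul_apply, Matrix.diagonal, Matrix.transpose_apply,
      hPAC a c]
    apply Finset.sum_congr rfl
    intro y _
    ring
  have hPAbC' : P_AbC = A * Matrix.diagonal (fun y => M_B b y) * Q := by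
    ext a c
    simp [hQ, Matrix.mul_assoc, Matrix.mul_apply, Matrix.diagonal, Matrix.transpose_apply,
      hPAbC a c]
    apply Finset.sum_congr rfl
    intro y _
    ring
  have hQdet : IsUnit Q.det := by
    have hd : P_AC.det = A.det * Q.det := by rw [hPAC', Matrix.det_mul]
    have h := (Matrix.isUnit_iff_isUnit_det P_AC).mp hPinv
    rw [hd] at h
    exact isUnit_of_mul_isUnit_left (by rwa [mul_comm] at h)
  rw [hPAbC', hPAC', Matrix.mul_inv_rev A Q, Matrix.mul_assoc (A * Matrix.diagonal fun y => M_B b y),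
    ← Matrix.mul_assoc Q, Matrix.mul_nonsing_inv _ hQdet, Matrix.one_mul]
end

section
/- Let k ≥ 1, π : Fin k → ℝ, M_A, M_B, M_C : Matrix (Fin k) (Fin k) ℝ, and fix b : Fin k. Define P_AC a c = ∑ y, π y * M_A a y * M_C c y and P_AbC a c = ∑ y, π y * M_A a y * M_B b y * M_C c y. Assume M_A and P_AC are invertible. Then Matrix.diagonal (fun y => M_B b y) = M_A⁻¹ * P_AbC * P_AC⁻¹ * M_A; in particular, the conditional probabilities P(B = b | Y = y) for all y are recovered as the diagonal entries of M_A⁻¹ * (P_AbC * P_AC⁻¹) * M_A, which depend only on the joint marginals P(A, B = b, C) and P(A, C) and on M_A. -/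
open Matrix

/-- the conditional probabilities `P(B = b | Y = y)` are recovered as the
diagonal matrix `M_A⁻¹ * (P_AbC * P_AC⁻¹) * M_A`. -/
theorem stmt9 (k : ℕ) (hk : 1 ≤ k) (pr : Fin k → ℝ)
    (M_A M_B M_C : Matrix (Fin k) (Fin k) ℝ) (b : Fin k)
    (P_AC P_AbC : Matrix (Fin k) (Fin k) ℝ)
    (hPAC : ∀ a c, P_AC a c = ∑ y, pr y * M_A a y * M_C c y)
    (hPAbC : ∀ a c, P_AbC a c = ∑ y, pr y * M_A a y * M_B b y * M_C c y)
    (hAinv : IsUnit M_A) (hPinv : IsUnit P_AC) :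
    Matrix.diagonal (fun y => M_B b y) = M_A⁻¹ * P_AbC * P_AC⁻¹ * M_A := by
  have hAd : IsUnit M_A.det := (Matrix.isUnit_iff_isUnit_det _).mp hAinv
  have hPd : IsUnit P_AC.det := (Matrix.isUnit_iff_isUnit_det _).mp hPinv
  set N : Matrix (Fin k) (Fin k) ℝ := Matrix.of (fun y c => pr y * M_C c y) with hN
  set D : Matrix (Fin k) (Fin k) ℝ := Matrix.diagonal (fun y => M_B b y) with hD
  have h1 : P_AC = M_A * N := by
    ext a c
    rw [hPAC, Matrix.mul_apply]
    apply Finset.sum_congr rfl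
    intro y _
    simp [hN]
    ring
  have h2 : P_AbC = M_A * (D * N) := by
    ext a c
    rw [hPAbC, Matrix.mul_apply]
    apply Finset.sum_congr rfl
    intro y _
    simp [hN, hD, Matrix.mul_apply, Matrix.diagonal_apply]
    ring
  rw [h2]; symm
  calc M_A⁻¹ * (M_A * (D * N)) * P_AC⁻¹ * M_A
      = (M_A⁻¹ * M_A) * (D * (N * P_AC⁻¹)) * M_A := by
        simp only [Matrix.mul_assoc]
    _ = D * (N * P_AC⁻¹) * M_A := by rw [Matrix.nonsing_inv_mul _ hAd, Matrix.one_mul]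
    _ = D := by
        have hN' : N = M_A⁻¹ * P_AC := by
          rw [h1, ← Matrix.mul_assoc, Matrix.nonsing_inv_mul _ hAd, Matrix.one_mul]
        rw [hN', Matrix.mul_assoc M_A⁻¹, Matrix.mul_nonsing_inv _ hPd, Matrix.mul_one,
          Matrix.mul_assoc, Matrix.nonsing_inv_mul _ hAd, Matrix.mul_one]
end
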